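/- Let fL, fU, g_j (j = 1,…,m) be convex real-valued functions on ℝⁿ with fL ≤ fU pointwise, suppose the Slater condition holds (there exists x̂ with g_j(x̂) < 0 for all j), let X = {x : g_j(x) ≤ 0 ∀j}, 0 ≤ εL ≤ εU, and x* ∈ X. If there exist μL, μU ≥ 0 with μL + μU = 1, ε_0 ≥ 0, ε_j ≥ 0, λ_j ≥ 0 (j=1,…,m) such that 0 ∈ ∂_{ε_0}(μL·fL + μU·fU)(x*) + Σ_j ∂_{ε_j}(λ_j g_j)(x*) and Σ_{j=0}^m ε_j − μL·εU − μU·εL ≤ Σ_j λ_j g_j(x*), then μL·fL(x) + μU·fU(x) ≥ μL·fL(x*) + μU·fU(x*) − (μL·εU + μU·εL) for all x ∈ X, and consequently x* is a weakly E-LU-solution of the interval problem. -/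

import Mathlib

/-!
Adding the ε-subgradient inequalities of `μL fL + μU fU` and of the `λⱼ gⱼ` at `x*`, the
condition `v₀ + ∑ vⱼ = 0` makes `x*` an `(ε₀ + ∑ εⱼ)`-minimiser of the Lagrangian
`μL fL + μU fU + ∑ λⱼ gⱼ`. On the feasible set `∑ λⱼ gⱼ ≤ 0`, and the complementarity
inequality absorbs the remaining error terms. A point improving both `fL` and `fU` by the
required margins would violate this bound for the weighted objective.
-/

/-- The ε-subdifferential of φ at x*. -/
def epsSubdiff {n : ℕ} (φ : EuclideanSpace ℝ (Fin n) → ℝ) (ε : ℝ)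
    (xs : EuclideanSpace ℝ (Fin n)) : Set (EuclideanSpace ℝ (Fin n)) :=
  {v | ∀ x, φ x - φ xs ≥ (inner ℝ v (x - xs) : ℝ) - ε}

open Finset

section EpsSubdiff

variable {n : ℕ} {xs : EuclideanSpace ℝ (Fin n)}

theorem epsSubdiff_add {φ ψ : EuclideanSpace ℝ (Fin n) → ℝ} {ε δ : ℝ}
    {v w : EuclideanSpace ℝ (Fin n)} (hv : v ∈ epsSubdiff φ ε xs)
    (hw : w ∈ epsSubdiff ψ δ xs) :
    v + w ∈ epsSubdiff (fun x => φ x + ψ x) (ε + δ) xs := by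
  intro x
  have := hv x
  have := hw x
  rw [inner_add_left]
  linarith

theorem epsSubdiff_sum {ι : Type*} (s : Finset ι) {φ : ι → EuclideanSpace ℝ (Fin n) → ℝ}
    {ε : ι → ℝ} {v : ι → EuclideanSpace ℝ (Fin n)}
    (hv : ∀ i ∈ s, v i ∈ epsSubdiff (φ i) (ε i) xs) :
    ∑ i ∈ s, v i ∈ epsSubdiff (fun x => ∑ i ∈ s, φ i x) (∑ i ∈ s, ε i) xs := by
  intro x
  have := sum_le_sum fun i hi => hv i hi x
  rw [sum_inner]
  simp only [sum_sub_distrib] at this ⊢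
  linarith

theorem zero_mem_epsSubdiff_iff {φ : EuclideanSpace ℝ (Fin n) → ℝ} {ε : ℝ} :
    0 ∈ epsSubdiff φ ε xs ↔ ∀ x, φ xs - ε ≤ φ x := by
  simp only [epsSubdiff, Set.mem_ofPred_eq, inner_zero_left]
  refine forall_congr' fun x => ?_
  constructor <;> intro h <;> linarith

end EpsSubdiff

theorem convex_combination_lt_convex_combination {μ ν a b a' b' : ℝ} (hμ : 0 ≤ μ)
    (hν : 0 ≤ ν) (hμν : μ + ν = 1) (ha : a < a') (hb : b < b') :
    μ * a + ν * b < μ * a' + ν * b' := by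
  rcases hμ.eq_or_lt with rfl | hμ
  · have hν : 0 < ν := by linarith
    nlinarith
  · nlinarith

theorem KKT_sufficient_weakly_E_LU_general (n m : ℕ)
    (fL fU : EuclideanSpace ℝ (Fin n) → ℝ)
    (g : Fin m → EuclideanSpace ℝ (Fin n) → ℝ)
    (εL εU : ℝ)
    (xs : EuclideanSpace ℝ (Fin n))
    (μL μU : ℝ) (hμL : 0 ≤ μL) (hμU : 0 ≤ μU) (hμ : μL + μU = 1)
    (ε0 : ℝ) (εj : Fin m → ℝ)
    (lam : Fin m → ℝ) (hlam : ∀ j, 0 ≤ lam j)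
    (hsub : ∃ v0 ∈ epsSubdiff (fun x => μL * fL x + μU * fU x) ε0 xs,
      ∃ v : Fin m → EuclideanSpace ℝ (Fin n),
        (∀ j, v j ∈ epsSubdiff (fun x => lam j * g j x) (εj j) xs) ∧
        v0 + ∑ j, v j = 0)
    (hineq : ε0 + ∑ j, εj j - μL * εU - μU * εL ≤ ∑ j, lam j * g j xs) :
    (∀ x, (∀ j, g j x ≤ 0) →
      μL * fL x + μU * fU x ≥ μL * fL xs + μU * fU xs - (μL * εU + μU * εL)) ∧
    ¬ ∃ x, (∀ j, g j x ≤ 0) ∧ fL x < fL xs - εU ∧ fU x < fU xs - εL := by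
  obtain ⟨v0, hv0, v, hv, hsum⟩ := hsub
  have hlagrangian := epsSubdiff_add hv0 (epsSubdiff_sum univ fun j _ => hv j)
  rw [hsum, zero_mem_epsSubdiff_iff] at hlagrangian
  have hbound : ∀ x, (∀ j, g j x ≤ 0) →
      μL * fL x + μU * fU x ≥ μL * fL xs + μU * fU xs - (μL * εU + μU * εL) := by
    intro x hx
    have hfeas : ∑ j, lam j * g j x ≤ 0 :=
      sum_nonpos fun j _ => mul_nonpos_of_nonneg_of_nonpos (hlam j) (hx j)
    linarith [hlagrangian x]
  refine ⟨hbound, ?_⟩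
  rintro ⟨x, hx, hL, hU⟩
  refine (hbound x hx).not_gt ?_
  linarith [convex_combination_lt_convex_combination hμL hμU hμ hL hU]

theorem KKT_sufficient_weakly_E_LU (n m : ℕ)
    (fL fU : EuclideanSpace ℝ (Fin n) → ℝ)
    (hfL : ConvexOn ℝ Set.univ fL) (hfU : ConvexOn ℝ Set.univ fU)
    (hf : ∀ x, fL x ≤ fU x)
    (g : Fin m → EuclideanSpace ℝ (Fin n) → ℝ)
    (hg : ∀ j, ConvexOn ℝ Set.univ (g j))
    (hSlater : ∃ xh, ∀ j, g j xh < 0)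
    (εL εU : ℝ) (hεL : 0 ≤ εL) (hε : εL ≤ εU)
    (xs : EuclideanSpace ℝ (Fin n)) (hxs : ∀ j, g j xs ≤ 0)
    (μL μU : ℝ) (hμL : 0 ≤ μL) (hμU : 0 ≤ μU) (hμ : μL + μU = 1)
    (ε0 : ℝ) (hε0 : 0 ≤ ε0) (εj : Fin m → ℝ) (hεj : ∀ j, 0 ≤ εj j)
    (lam : Fin m → ℝ) (hlam : ∀ j, 0 ≤ lam j)
    (hsub : ∃ v0 ∈ epsSubdiff (fun x => μL * fL x + μU * fU x) ε0 xs,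
      ∃ v : Fin m → EuclideanSpace ℝ (Fin n),
        (∀ j, v j ∈ epsSubdiff (fun x => lam j * g j x) (εj j) xs) ∧
        v0 + ∑ j, v j = 0)
    (hineq : ε0 + ∑ j, εj j - μL * εU - μU * εL ≤ ∑ j, lam j * g j xs) :
    (∀ x, (∀ j, g j x ≤ 0) →
      μL * fL x + μU * fU x ≥ μL * fL xs + μU * fU xs - (μL * εU + μU * εL)) ∧
    ¬ ∃ x, (∀ j, g j x ≤ 0) ∧ fL x < fL xs - εU ∧ fU x < fU xs - εL :=
  KKT_sufficient_weakly_E_LU_general n m fL fU g εL εU xs μL μU hμL hμU hμ ε0 εj lam hlam hsub hineq
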